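/- Let K > 0. There are constants A > 0 and n₀ ≥ 2 depending only on K such that the following holds for all integers n ≥ n₀ and N with 2 ≤ N and N⁶ ≤ n. Let φ_{ab} ∈ [0,π] (1 ≤ a < b ≤ N) be angles, define unit vectors u₁,…,u_N ∈ ℝ^n by (u_i)_k = cos(φ_{ki})·∏_{m=1}^{k−1} sin(φ_{mi}) for 1 ≤ k ≤ i−1, (u_i)_i = ∏_{m=1}^{i−1} sin(φ_{mi}), and (u_i)_k = 0 for k > i, and set α̃_{ij} = √n·(arccos(u_i·u_j) − π/2) for 1 ≤ i < j ≤ N. If |α̃_{ij}| ≤ K for all 1 ≤ i < j ≤ N, then there exists a real number h with |h| ≤ A·N³/√n such that ∏_{1≤i<j≤N} sin(φ_{ij})^{n−N−1}·cos(α̃_{ij}/√n) = (1 + h) · ∏_{1≤i<j≤N} e^{−α̃_{ij}²/2}. -/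

import Mathlib

open Real Finset

/-!
Write `tᵢⱼ = α̃ᵢⱼ / √n`, so that `uᵢ · uⱼ = -sin tᵢⱼ = O(1/√n)`. The spherical coordinates are
triangular: `uᵢ · uⱼ = Sᵢⱼ + cos φᵢⱼ · Qᵢⱼ` with `Qᵢⱼ = ∏_{m<i} sin φₘᵢ sin φₘⱼ` and `Sᵢⱼ` a sum
of terms `cos φₘᵢ cos φₘⱼ · (…)` over `m < i`. Strong induction on `i` therefore gives
`|cos φᵢⱼ| = O(1/√n)`, whence `Qᵢⱼ = 1 + O(N/n)`, `Sᵢⱼ = O(N/n)` and `cos φᵢⱼ = -tᵢⱼ + O(N/n)`.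
Expanding the logarithms,
`log (sin φᵢⱼ ^ (n-N-1) · cos tᵢⱼ) = -n cos² φᵢⱼ / 2 + O(N/√n) = -α̃ᵢⱼ² / 2 + O(N/√n)`.
Summed over fewer than `N²` pairs, the error `X` is `O(N³/√n) = O(1)` because `N⁶ ≤ n`, and
`h = eˣ - 1`.
-/

/-- The i-th point of the sphere S^{n-1} ⊂ ℝⁿ in spherical coordinates:
u_i = (cos φ_{1i}, sin φ_{1i} cos φ_{2i}, …, sin φ_{1i}⋯sin φ_{i-1,i}, 0, …, 0).
Coordinates are 0-indexed: the k-th coordinate (k : Fin n) corresponds to index k+1. -/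
noncomputable def sphVec (n : ℕ) (φ : ℕ → ℕ → ℝ) (i : ℕ) : Fin n → ℝ := fun k =>
  if (k : ℕ) + 1 < i then
    Real.cos (φ ((k : ℕ) + 1) i) * ∏ m ∈ Finset.Icc 1 (k : ℕ), Real.sin (φ m i)
  else if (k : ℕ) + 1 = i then
    ∏ m ∈ Finset.Icc 1 (k : ℕ), Real.sin (φ m i)
  else 0

/-- α̃_{ij} = √n·(arccos(u_i·u_j) − π/2), where · is the standard inner product on ℝⁿ. -/
noncomputable def alphaTilde (n : ℕ) (φ : ℕ → ℕ → ℝ) (i j : ℕ) : ℝ :=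
  Real.sqrt n * (Real.arccos (∑ k : Fin n, sphVec n φ i k * sphVec n φ j k) - Real.pi / 2)

theorem abs_exp_sub_one_le_mul_exp_abs (x : ℝ) : |exp x - 1| ≤ |x| * exp |x| := by
  rcases le_total 0 x with hx | hx
  · have h : 1 - x ≤ exp (-x) := by linarith [add_one_le_exp (-x)]
    have h' : (1 - x) * exp x ≤ 1 := by
      simpa [← exp_add] using mul_le_mul_of_nonneg_right h (exp_pos x).le
    rw [abs_of_nonneg hx, abs_of_nonneg (by linarith [one_le_exp hx])]
    linarith
  · rw [abs_of_nonpos hx, abs_of_nonpos (by linarith [exp_le_one_iff.mpr hx])]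
    nlinarith [add_one_le_exp x, one_le_exp (neg_nonneg.mpr hx)]

theorem abs_log_one_sub_add_le {x : ℝ} (h0 : 0 ≤ x) (h1 : x ≤ 1 / 2) :
    |log (1 - x) + x| ≤ 2 * x ^ 2 := by
  have h := abs_log_sub_add_sum_range_le (x := x) (by rw [abs_of_nonneg h0]; linarith) 1
  simp only [range_one, sum_singleton, zero_add, pow_one, Nat.cast_zero, div_one,
    abs_of_nonneg h0] at h
  rw [add_comm]
  calc |x + log (1 - x)| ≤ x ^ 2 / (1 - x) := h
    _ ≤ 2 * x ^ 2 := by rw [div_le_iff₀ (by linarith)]; nlinarith [sq_nonneg x]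

theorem abs_log_sin_add_half_cos_sq_le {x : ℝ} (hc : cos x ^ 2 ≤ 1 / 2) :
    |log (sin x) + cos x ^ 2 / 2| ≤ cos x ^ 4 := by
  have hlog : log (sin x) = log (1 - cos x ^ 2) / 2 := by
    rw [← sin_sq, log_pow]; push_cast; ring
  have h := abs_log_one_sub_add_le (sq_nonneg (cos x)) hc
  rw [hlog, ← add_div, abs_div, abs_two]
  linarith [show (cos x ^ 2) ^ 2 = cos x ^ 4 by ring]

theorem abs_log_cos_le_sq {t : ℝ} (ht : t ^ 2 ≤ 1) : |log (cos t)| ≤ t ^ 2 := by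
  have hcos : 1 - t ^ 2 / 2 ≤ cos t := one_sub_sq_div_two_le_cos
  have hpos : 0 < cos t := by linarith
  have hlow : -(1 / cos t - 1) ≤ log (cos t) := by
    have := log_le_sub_one_of_pos (inv_pos.mpr hpos)
    rw [log_inv] at this
    rw [one_div]; linarith
  have hinv : 1 / cos t - 1 ≤ t ^ 2 := by
    rw [div_sub_one hpos.ne', div_le_iff₀ hpos]; nlinarith
  rw [abs_le]
  exact ⟨by linarith, by linarith [log_nonpos hpos.le (cos_le_one t), sq_nonneg t]⟩

theorem sq_le_sq_of_abs_le {x ε : ℝ} (h : |x| ≤ ε) : x ^ 2 ≤ ε ^ 2 :=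
  sq_le_sq' (abs_le.mp h).1 (abs_le.mp h).2

theorem abs_mul_log_sin_add_log_cos_add_le {m n q x t ε δ : ℝ} (hm : 0 ≤ m) (hmn : m ≤ n)
    (hnm : n - m ≤ q) (hc : |cos x| ≤ ε) (ht : |t| ≤ ε) (hct : |cos x + t| ≤ δ)
    (hε : ε ^ 2 ≤ 1 / 2) :
    |m * log (sin x) + log (cos t) + n * t ^ 2 / 2| ≤
      n * ε ^ 4 + ε ^ 2 + n * δ * ε + q * ε ^ 2 / 2 := by
  have hc2 : cos x ^ 2 ≤ ε ^ 2 := sq_le_sq_of_abs_le hc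
  have ht2 : t ^ 2 ≤ ε ^ 2 := sq_le_sq_of_abs_le ht
  have hn : 0 ≤ n := hm.trans hmn
  have hlog_sin : m * |log (sin x) + cos x ^ 2 / 2| ≤ n * ε ^ 4 :=
    mul_le_mul hmn ((abs_log_sin_add_half_cos_sq_le (hc2.trans hε)).trans (by nlinarith))
      (abs_nonneg _) hn
  have hlog_cos : |log (cos t)| ≤ ε ^ 2 := (abs_log_cos_le_sq (by linarith)).trans ht2
  have hdiff : n * |t ^ 2 - cos x ^ 2| / 2 ≤ n * δ * ε := by
    rw [show t ^ 2 - cos x ^ 2 = (cos x + t) * (t - cos x) by ring, abs_mul]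
    have := mul_le_mul hct ((abs_sub _ _).trans (add_le_add ht hc)) (abs_nonneg _)
      ((abs_nonneg _).trans hct)
    nlinarith
  calc |m * log (sin x) + log (cos t) + n * t ^ 2 / 2|
      = |m * (log (sin x) + cos x ^ 2 / 2) + log (cos t) + n * (t ^ 2 - cos x ^ 2) / 2
          + (n - m) * cos x ^ 2 / 2| := by ring_nf
    _ ≤ m * |log (sin x) + cos x ^ 2 / 2| + |log (cos t)| + n * |t ^ 2 - cos x ^ 2| / 2
          + (n - m) * cos x ^ 2 / 2 := by
        refine (abs_add_le _ _).trans (add_le_add ((abs_add_three _ _ _).trans ?_) ?_)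
        · rw [abs_mul, abs_of_nonneg hm, abs_div, abs_mul, abs_of_nonneg hn, abs_two]
        · rw [abs_of_nonneg (by nlinarith [sq_nonneg (cos x)])]
    _ ≤ _ := by nlinarith

theorem one_sub_sum_le_prod {ι : Type*} (s : Finset ι) {f : ι → ℝ} (h0 : ∀ i ∈ s, 0 ≤ f i)
    (h1 : ∀ i ∈ s, f i ≤ 1) : 1 - ∑ i ∈ s, (1 - f i) ≤ ∏ i ∈ s, f i := by
  classical
  induction s using Finset.induction_on with
  | empty => simp
  | insert a s ha ih =>
    rw [prod_insert ha, sum_insert ha]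
    have hs0 := fun i hi => h0 i (mem_insert_of_mem hi)
    have hs1 := fun i hi => h1 i (mem_insert_of_mem hi)
    nlinarith [ih hs0 hs1, prod_le_one hs0 hs1, h0 a (mem_insert_self a s),
      h1 a (mem_insert_self a s), sum_nonneg fun i hi => sub_nonneg.mpr (hs1 i hi)]

theorem exists_prod_eq_one_add_mul_prod_exp {ι : Type*} (s : Finset ι) {f y : ι → ℝ} {δ : ℝ}
    (hf : ∀ p ∈ s, 0 < f p) (hδ : ∀ p ∈ s, |log (f p) - y p| ≤ δ) :
    ∃ h : ℝ, |h| ≤ #s * δ * exp (#s * δ) ∧ ∏ p ∈ s, f p = (1 + h) * ∏ p ∈ s, exp (y p) := by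
  let X := ∑ p ∈ s, (log (f p) - y p)
  have hX : |X| ≤ #s * δ := by
    simpa only [nsmul_eq_mul] using (abs_sum_le_sum_abs _ _).trans (sum_le_card_nsmul s _ δ hδ)
  refine ⟨exp X - 1, (abs_exp_sub_one_le_mul_exp_abs X).trans ?_, ?_⟩
  · exact mul_le_mul hX (exp_le_exp.mpr hX) (exp_pos _).le ((abs_nonneg X).trans hX)
  · rw [add_sub_cancel, ← exp_sum, ← exp_add,
      show X + ∑ p ∈ s, y p = ∑ p ∈ s, log (f p) by simp [X], exp_sum]
    exact prod_congr rfl fun p hp => (exp_log (hf p hp)).symm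

theorem mul_le_sqrt_of_pow_six_le {a b x : ℝ} (hx : 1 ≤ x) (hax : a ^ 6 ≤ x) (hbx : b ^ 6 ≤ x) :
    a * b ≤ √x := by
  refine le_of_pow_le_pow_left₀ (n := 6) (by norm_num) (sqrt_nonneg x) ?_
  calc (a * b) ^ 6 = a ^ 6 * b ^ 6 := mul_pow a b 6
    _ ≤ x * x := by gcongr
    _ ≤ √x ^ 6 := by
      rw [show √x ^ 6 = x ^ 3 by rw [show 6 = 2 * 3 by rfl, pow_mul, sq_sqrt (by linarith)]]
      nlinarith

theorem card_sigma_Icc_le_sq (N : ℕ) : #((Icc 1 N).sigma fun i => Icc (i + 1) N) ≤ N ^ 2 := by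
  rw [card_sigma, sq]
  simpa using sum_le_card_nsmul (Icc 1 N) _ N fun i _ => by simp

noncomputable def sphCoord (φ : ℕ → ℕ → ℝ) (i k : ℕ) : ℝ :=
  if k + 1 < i then cos (φ (k + 1) i) * ∏ m ∈ Icc 1 k, sin (φ m i)
  else if k + 1 = i then ∏ m ∈ Icc 1 k, sin (φ m i) else 0

noncomputable def sinProd (ψ χ : ℕ → ℝ) (r : ℕ) : ℝ := ∏ m ∈ Icc 1 r, sin (ψ m) * sin (χ m)

noncomputable def cosSinSum (ψ χ : ℕ → ℝ) (r : ℕ) : ℝ :=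
  ∑ k ∈ range r, cos (ψ (k + 1)) * cos (χ (k + 1)) * sinProd ψ χ k

theorem sinProd_succ (ψ χ : ℕ → ℝ) (r : ℕ) :
    sinProd ψ χ (r + 1) = sinProd ψ χ r * (sin (ψ (r + 1)) * sin (χ (r + 1))) :=
  prod_Icc_succ_top (Nat.le_add_left 1 r) _

theorem cosSinSum_self_add_sinProd_self (ψ : ℕ → ℝ) (r : ℕ) :
    cosSinSum ψ ψ r + sinProd ψ ψ r = 1 := by
  induction r with
  | zero => simp [cosSinSum, sinProd]
  | succ r ih =>
    rw [cosSinSum, sum_range_succ, ← cosSinSum, sinProd_succ]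
    linear_combination ih + sinProd ψ ψ r * sin_sq_add_cos_sq (ψ (r + 1))

theorem sum_sphVec_mul_sphVec_eq_sum_range (n : ℕ) (φ : ℕ → ℕ → ℝ) {i : ℕ} (j : ℕ)
    (hin : i ≤ n) :
    ∑ k : Fin n, sphVec n φ i k * sphVec n φ j k =
      ∑ k ∈ range i, sphCoord φ i k * sphCoord φ j k := by
  rw [sum_subset (range_subset_range.mpr hin) fun k _ hk => by
      rw [sphCoord, if_neg (by simp at hk; omega), if_neg (by simp at hk; omega), zero_mul]]
  exact Fin.sum_univ_eq_sum_range (fun k => sphCoord φ i k * sphCoord φ j k) n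

theorem sum_range_sphCoord_mul_sphCoord (φ : ℕ → ℕ → ℝ) {i j : ℕ} (hi : 1 ≤ i) (hij : i ≤ j) :
    ∑ k ∈ range i, sphCoord φ i k * sphCoord φ j k =
      cosSinSum (φ · i) (φ · j) (i - 1) +
        sphCoord φ j (i - 1) * ∏ m ∈ Icc 1 (i - 1), sin (φ m i) := by
  obtain ⟨r, rfl⟩ : ∃ r, i = r + 1 := ⟨i - 1, by omega⟩
  rw [sum_range_succ, Nat.add_sub_cancel, cosSinSum]
  congr 1
  · refine sum_congr rfl fun k hk => ?_
    have hk := mem_range.mp hk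
    simp only [sphCoord, if_pos (show k + 1 < r + 1 by omega), if_pos (show k + 1 < j by omega),
      sinProd, prod_mul_distrib]
    ring
  · rw [sphCoord, if_neg (by omega), if_pos rfl, mul_comm]

theorem sum_sphVec_mul_self (n : ℕ) (φ : ℕ → ℕ → ℝ) {i : ℕ} (hi : 1 ≤ i) (hin : i ≤ n) :
    ∑ k : Fin n, sphVec n φ i k * sphVec n φ i k = 1 := by
  rw [sum_sphVec_mul_sphVec_eq_sum_range n φ i hin, sum_range_sphCoord_mul_sphCoord φ hi le_rfl,
    ← cosSinSum_self_add_sinProd_self (φ · i) (i - 1), sphCoord, if_neg (by omega),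
    if_pos (by omega), sinProd, prod_mul_distrib]

theorem sum_sphVec_mul_sphVec (n : ℕ) (φ : ℕ → ℕ → ℝ) {i j : ℕ} (hi : 1 ≤ i) (hij : i < j)
    (hin : i ≤ n) :
    ∑ k : Fin n, sphVec n φ i k * sphVec n φ j k =
      cosSinSum (φ · i) (φ · j) (i - 1) + cos (φ i j) * sinProd (φ · i) (φ · j) (i - 1) := by
  rw [sum_sphVec_mul_sphVec_eq_sum_range n φ j hin, sum_range_sphCoord_mul_sphCoord φ hi hij.le,
    sphCoord, if_pos (by omega), Nat.sub_add_cancel hi, sinProd, prod_mul_distrib]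
  ring

theorem abs_sum_sphVec_mul_sphVec_le_one {n : ℕ} (φ : ℕ → ℕ → ℝ) {i j : ℕ} (hi : 1 ≤ i)
    (hj : 1 ≤ j) (hin : i ≤ n) (hjn : j ≤ n) :
    |∑ k, sphVec n φ i k * sphVec n φ j k| ≤ 1 := by
  have h := sum_mul_sq_le_sq_mul_sq univ (sphVec n φ i) (sphVec n φ j)
  simp only [sq, sum_sphVec_mul_self n φ hi hin, sum_sphVec_mul_self n φ hj hjn, mul_one] at h
  exact abs_le_one_iff_mul_self_le_one.mpr h

theorem sum_sphVec_mul_sphVec_eq_neg_sin {n : ℕ} (φ : ℕ → ℕ → ℝ) {i j : ℕ} (hi : 1 ≤ i)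
    (hij : i < j) (hjn : j ≤ n) :
    ∑ k, sphVec n φ i k * sphVec n φ j k = -sin (alphaTilde n φ i j / √n) := by
  have h := abs_le.mp (abs_sum_sphVec_mul_sphVec_le_one φ hi (by omega) (by omega) hjn)
  have hn : √(n : ℝ) ≠ 0 := sqrt_ne_zero'.mpr (by exact_mod_cast (by omega : 0 < n))
  rw [alphaTilde, mul_div_cancel_left₀ _ hn, sin_sub_pi_div_two, cos_arccos h.1 h.2, neg_neg]

theorem one_sub_sin_mul_sin_le {a b : ℝ} (ha : 0 ≤ sin a) (hb : 0 ≤ sin b) :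
    1 - sin a * sin b ≤ cos a ^ 2 + cos b ^ 2 := by
  nlinarith [sin_sq_add_cos_sq a, sin_sq_add_cos_sq b, sin_le_one a, sin_le_one b,
    mul_nonneg ha hb, mul_le_one₀ (sin_le_one a) hb (sin_le_one b), sq_nonneg (cos a * cos b)]

section Columns

variable {ψ χ : ℕ → ℝ} {r : ℕ} {ε : ℝ}

theorem sinProd_nonneg (hψ : ∀ m ∈ Icc 1 r, 0 ≤ sin (ψ m)) (hχ : ∀ m ∈ Icc 1 r, 0 ≤ sin (χ m)) :
    0 ≤ sinProd ψ χ r :=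
  prod_nonneg fun m hm => mul_nonneg (hψ m hm) (hχ m hm)

theorem sinProd_le_one (hψ : ∀ m ∈ Icc 1 r, 0 ≤ sin (ψ m)) (hχ : ∀ m ∈ Icc 1 r, 0 ≤ sin (χ m)) :
    sinProd ψ χ r ≤ 1 :=
  prod_le_one (fun m hm => mul_nonneg (hψ m hm) (hχ m hm))
    fun m hm => mul_le_one₀ (sin_le_one _) (hχ m hm) (sin_le_one _)

theorem one_sub_le_sinProd (hψ : ∀ m ∈ Icc 1 r, 0 ≤ sin (ψ m) ∧ |cos (ψ m)| ≤ ε)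
    (hχ : ∀ m ∈ Icc 1 r, 0 ≤ sin (χ m) ∧ |cos (χ m)| ≤ ε) :
    1 - 2 * r * ε ^ 2 ≤ sinProd ψ χ r := by
  have hsum : ∑ m ∈ Icc 1 r, (1 - sin (ψ m) * sin (χ m)) ≤ r * (2 * ε ^ 2) := by
    simpa using sum_le_card_nsmul _ _ _ fun m hm =>
      (one_sub_sin_mul_sin_le (hψ m hm).1 (hχ m hm).1).trans
        (by linarith [sq_le_sq_of_abs_le (hψ m hm).2, sq_le_sq_of_abs_le (hχ m hm).2])
  have := one_sub_sum_le_prod (Icc 1 r) (fun m hm => mul_nonneg (hψ m hm).1 (hχ m hm).1)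
    fun m hm => mul_le_one₀ (sin_le_one _) (hχ m hm).1 (sin_le_one _)
  rw [sinProd]
  linarith

theorem abs_cosSinSum_le (hψ : ∀ m ∈ Icc 1 r, 0 ≤ sin (ψ m) ∧ |cos (ψ m)| ≤ ε)
    (hχ : ∀ m ∈ Icc 1 r, 0 ≤ sin (χ m) ∧ |cos (χ m)| ≤ ε) :
    |cosSinSum ψ χ r| ≤ r * ε ^ 2 := by
  calc |cosSinSum ψ χ r|
      ≤ ∑ k ∈ range r, |cos (ψ (k + 1)) * cos (χ (k + 1)) * sinProd ψ χ k| := abs_sum_le_sum_abs _ _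
    _ ≤ ∑ k ∈ range r, ε * ε := sum_le_sum fun k hk => by
      have hk1 : k + 1 ∈ Icc 1 r := mem_Icc.mpr ⟨by omega, mem_range.mp hk⟩
      have hsub : ∀ m ∈ Icc 1 k, m ∈ Icc 1 r := fun m hm => by
        simp only [mem_Icc, mem_range] at hm hk ⊢; omega
      have hP0 := sinProd_nonneg (fun m hm => (hψ m (hsub m hm)).1) fun m hm => (hχ m (hsub m hm)).1
      have hP1 := sinProd_le_one (fun m hm => (hψ m (hsub m hm)).1) fun m hm => (hχ m (hsub m hm)).1
      rw [abs_mul, abs_mul, abs_of_nonneg hP0]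
      calc |cos (ψ (k + 1))| * |cos (χ (k + 1))| * sinProd ψ χ k
          ≤ |cos (ψ (k + 1))| * |cos (χ (k + 1))| := mul_le_of_le_one_right (by positivity) hP1
        _ ≤ ε * ε :=
          mul_le_mul (hψ _ hk1).2 (hχ _ hk1).2 (abs_nonneg _) ((abs_nonneg _).trans (hψ _ hk1).2)
    _ = r * ε ^ 2 := by simp [sq]

end Columns

theorem column_bounds_of_abs_cos_le {N : ℕ} {φ : ℕ → ℕ → ℝ} {ε : ℝ} {i j : ℕ}
    (hsin : ∀ a b, 1 ≤ a → a < b → b ≤ N → 0 ≤ sin (φ a b))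
    (hcos : ∀ m < i, ∀ b, 1 ≤ m → m < b → b ≤ N → |cos (φ m b)| ≤ ε) (hij : i ≤ j) (hjN : j ≤ N) :
    ∀ m ∈ Icc 1 (i - 1), 0 ≤ sin (φ m j) ∧ |cos (φ m j)| ≤ ε := fun m hm => by
  obtain ⟨h1, h2⟩ := mem_Icc.mp hm
  exact ⟨hsin m j h1 (by omega) hjN, hcos m (by omega) j h1 (by omega) hjN⟩

theorem abs_cos_le_of_abs_inner_le {n N : ℕ} {φ : ℕ → ℕ → ℝ} {ε η : ℝ} (hNn : N ≤ n)
    (hsin : ∀ a b, 1 ≤ a → a < b → b ≤ N → 0 ≤ sin (φ a b))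
    (hinner : ∀ i j, 1 ≤ i → i < j → j ≤ N → |∑ k, sphVec n φ i k * sphVec n φ j k| ≤ η)
    (hε : 4 * N * ε ^ 2 ≤ 1) (hηε : 2 * (η + N * ε ^ 2) ≤ ε) :
    ∀ i j, 1 ≤ i → i < j → j ≤ N → |cos (φ i j)| ≤ ε := by
  intro i
  induction i using Nat.strong_induction_on with
  | _ i ih =>
  intro j hi hij hjN
  have hψ := column_bounds_of_abs_cos_le hsin ih le_rfl (hij.le.trans hjN)
  have hχ := column_bounds_of_abs_cos_le hsin ih hij.le hjN
  have hr : ((i - 1 : ℕ) : ℝ) ≤ N := by exact_mod_cast (by omega : i - 1 ≤ N)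
  have hQ : 1 / 2 ≤ sinProd (φ · i) (φ · j) (i - 1) := by
    nlinarith [one_sub_le_sinProd hψ hχ, sq_nonneg ε]
  have hS := abs_cosSinSum_le hψ hχ
  have hcosQ : |cos (φ i j)| * sinProd (φ · i) (φ · j) (i - 1) ≤ η + N * ε ^ 2 := by
    rw [← abs_of_nonneg (hQ.trans' (by norm_num)), ← abs_mul,
      eq_sub_of_add_eq' (sum_sphVec_mul_sphVec n φ hi hij (by omega)).symm]
    refine (abs_sub _ _).trans (add_le_add (hinner i j hi hij hjN) (hS.trans ?_))
    nlinarith [sq_nonneg ε]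
  nlinarith [abs_nonneg (cos (φ i j))]

theorem abs_cos_add_le {n N : ℕ} {φ : ℕ → ℕ → ℝ} {ε t : ℝ} (hNn : N ≤ n)
    (hsin : ∀ a b, 1 ≤ a → a < b → b ≤ N → 0 ≤ sin (φ a b))
    (hcos : ∀ i j, 1 ≤ i → i < j → j ≤ N → |cos (φ i j)| ≤ ε) {i j : ℕ} (hi : 1 ≤ i) (hij : i < j)
    (hjN : j ≤ N) (ht : ∑ k, sphVec n φ i k * sphVec n φ j k = -sin t) :
    |cos (φ i j) + t| ≤ 2 * N * ε ^ 3 + N * ε ^ 2 + |t| ^ 3 / 6 := by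
  have hψ := column_bounds_of_abs_cos_le hsin (fun m _ => hcos m) le_rfl (hij.le.trans hjN)
  have hχ := column_bounds_of_abs_cos_le hsin (fun m _ => hcos m) hij.le hjN
  have hr : ((i - 1 : ℕ) : ℝ) ≤ N := by exact_mod_cast (by omega : i - 1 ≤ N)
  set Q := sinProd (φ · i) (φ · j) (i - 1)
  set S := cosSinSum (φ · i) (φ · j) (i - 1)
  have hc := hcos i j hi hij hjN
  have hε : 0 ≤ ε := (abs_nonneg _).trans hc
  have hQ : |1 - Q| ≤ 2 * N * ε ^ 2 := by
    rw [abs_of_nonneg (sub_nonneg.mpr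
      (sinProd_le_one (fun m hm => (hψ m hm).1) fun m hm => (hχ m hm).1))]
    nlinarith [one_sub_le_sinProd hψ hχ, sq_nonneg ε]
  have hS : |S| ≤ N * ε ^ 2 := (abs_cosSinSum_le hψ hχ).trans (by nlinarith [sq_nonneg ε])
  have hsplit : cos (φ i j) + t = cos (φ i j) * (1 - Q) - S + (t - sin t) := by
    linear_combination (sum_sphVec_mul_sphVec n φ hi hij (by omega)).symm.trans ht
  rw [hsplit]
  calc |cos (φ i j) * (1 - Q) - S + (t - sin t)|
      ≤ |cos (φ i j)| * |1 - Q| + |S| + |t - sin t| := by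
        rw [← abs_mul]; exact (abs_add_le _ _).trans (by gcongr; exact abs_sub _ _)
    _ ≤ ε * (2 * N * ε ^ 2) + N * ε ^ 2 + |t| ^ 3 / 6 := by
        gcongr
        exact abs_sub_sin_le t
    _ = _ := by ring

theorem abs_div_sqrt_le {a c : ℝ} (n : ℕ) (h : |a| ≤ c) : |a / √n| ≤ c / √n := by
  rw [abs_div, abs_of_nonneg (sqrt_nonneg _)]
  exact div_le_div_of_nonneg_right h (sqrt_nonneg _)

theorem abs_cos_le_of_abs_alphaTilde_le {n N : ℕ} {φ : ℕ → ℕ → ℝ} {K : ℝ} (hK : 0 ≤ K)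
    (hnN : 4 * (2 * K + 1) ^ 2 * N ≤ √n)
    (hφ : ∀ a b : ℕ, 1 ≤ a → a < b → b ≤ N → φ a b ∈ Set.Icc 0 π)
    (hα : ∀ i j : ℕ, 1 ≤ i → i < j → j ≤ N → |alphaTilde n φ i j| ≤ K) :
    ∀ i j, 1 ≤ i → i < j → j ≤ N → |cos (φ i j)| ≤ (2 * K + 1) / √n := by
  set C := 2 * K + 1
  set s := √(n : ℝ)
  intro i j hi hij hjN
  have hN : (1 : ℝ) ≤ N := by exact_mod_cast (by omega : 1 ≤ N)
  have hC : 1 ≤ C := by linarith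
  have hs : 4 * N ≤ s := by nlinarith [one_le_pow₀ (n := 2) hC]
  have hs0 : 0 < s := by linarith
  have hNn : N ≤ n := by
    have : (N : ℝ) ≤ n := by nlinarith [sq_sqrt n.cast_nonneg]
    exact_mod_cast this
  refine abs_cos_le_of_abs_inner_le (η := K / s) hNn
    (fun a b ha hab hb => sin_nonneg_of_nonneg_of_le_pi (hφ a b ha hab hb).1 (hφ a b ha hab hb).2)
    (fun i j hi hij hj => ?_) ?_ ?_ i j hi hij hjN
  · rw [sum_sphVec_mul_sphVec_eq_neg_sin φ hi hij (by omega), abs_neg]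
    exact abs_sin_le_abs.trans (abs_div_sqrt_le n (hα i j hi hij hj))
  · rw [div_pow, mul_div_assoc', div_le_one (by positivity)]
    nlinarith [sq_sqrt n.cast_nonneg]
  · have h : 2 * N * C ^ 2 / s ≤ 1 / 2 := by rw [div_le_iff₀ hs0]; linarith
    calc 2 * (K / s + N * (C / s) ^ 2) = (2 * K + 2 * N * C ^ 2 / s) / s := by field_simp
      _ ≤ C / s := by gcongr; linarith

theorem abs_cos_add_le_of_abs_alphaTilde_le {n N : ℕ} {φ : ℕ → ℕ → ℝ} {K : ℝ} (hK : 0 ≤ K)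
    (hnN : 4 * (2 * K + 1) ^ 2 * N ≤ √n)
    (hφ : ∀ a b : ℕ, 1 ≤ a → a < b → b ≤ N → φ a b ∈ Set.Icc 0 π)
    (hα : ∀ i j : ℕ, 1 ≤ i → i < j → j ≤ N → |alphaTilde n φ i j| ≤ K)
    {i j : ℕ} (hi : 1 ≤ i) (hij : i < j) (hjN : j ≤ N) :
    |cos (φ i j) + alphaTilde n φ i j / √n| ≤ 4 * (2 * K + 1) ^ 3 * N / n := by
  set C := 2 * K + 1
  set s := √(n : ℝ)
  have hN : (1 : ℝ) ≤ N := by exact_mod_cast (by omega : 1 ≤ N)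
  have hC : 1 ≤ C := by linarith
  have hs1 : 1 ≤ s := by nlinarith [one_le_pow₀ (n := 2) hC]
  have hsn : s ^ 2 = n := sq_sqrt n.cast_nonneg
  have hNn : N ≤ n := by
    have : (N : ℝ) ≤ n := by nlinarith [one_le_pow₀ (n := 2) hC]
    exact_mod_cast this
  have ht : |alphaTilde n φ i j / s| ≤ C / s :=
    abs_div_sqrt_le n ((hα i j hi hij hjN).trans (by linarith))
  calc |cos (φ i j) + alphaTilde n φ i j / s|
      ≤ 2 * N * (C / s) ^ 3 + N * (C / s) ^ 2 + |alphaTilde n φ i j / s| ^ 3 / 6 :=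
        abs_cos_add_le hNn (fun a b ha hab hb =>
            sin_nonneg_of_nonneg_of_le_pi (hφ a b ha hab hb).1 (hφ a b ha hab hb).2)
          (abs_cos_le_of_abs_alphaTilde_le hK hnN hφ hα) hi hij hjN
          (sum_sphVec_mul_sphVec_eq_neg_sin φ hi hij (by omega))
    _ ≤ 2 * N * (C / s) ^ 3 + N * (C / s) ^ 2 + (C / s) ^ 3 / 6 := by gcongr
    _ ≤ 4 * C ^ 3 * N / n := by
        rw [← hsn]; field_simp
        nlinarith [mul_le_mul_of_nonneg_left hs1 (by positivity : (0 : ℝ) ≤ N * C ^ 3),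
          mul_le_mul_of_nonneg_left hC (by positivity : (0 : ℝ) ≤ N * C ^ 2 * s),
          mul_le_mul_of_nonneg_left (hN.trans (by nlinarith : (N : ℝ) ≤ N * s))
            (by positivity : (0 : ℝ) ≤ C ^ 3)]

theorem sin_pow_mul_cos_pos_and_abs_log_sub_le {n N : ℕ} {φ : ℕ → ℕ → ℝ} {K : ℝ} (hK : 0 ≤ K)
    (hnN : 4 * (2 * K + 1) ^ 2 * N ≤ √n)
    (hφ : ∀ a b : ℕ, 1 ≤ a → a < b → b ≤ N → φ a b ∈ Set.Icc 0 π)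
    (hα : ∀ i j : ℕ, 1 ≤ i → i < j → j ≤ N → |alphaTilde n φ i j| ≤ K)
    {i j : ℕ} (hi : 1 ≤ i) (hij : i < j) (hjN : j ≤ N) :
    0 < sin (φ i j) ^ (n - N - 1) * cos (alphaTilde n φ i j / √n) ∧
      |log (sin (φ i j) ^ (n - N - 1) * cos (alphaTilde n φ i j / √n)) -
        -alphaTilde n φ i j ^ 2 / 2| ≤ 7 * (2 * K + 1) ^ 4 * N / √n := by
  have hc := abs_cos_le_of_abs_alphaTilde_le hK hnN hφ hα i j hi hij hjN
  have hct := abs_cos_add_le_of_abs_alphaTilde_le hK hnN hφ hα hi hij hjN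
  set C := 2 * K + 1
  set s := √(n : ℝ)
  set t := alphaTilde n φ i j / s
  have hN : (1 : ℝ) ≤ N := by exact_mod_cast (by omega : 1 ≤ N)
  have hC : 1 ≤ C := by linarith
  have hs : 4 * C ^ 2 ≤ s := by nlinarith
  have hs0 : 0 < s := by nlinarith
  have hsn : s ^ 2 = n := sq_sqrt n.cast_nonneg
  have ht : |t| ≤ C / s := abs_div_sqrt_le n ((hα i j hi hij hjN).trans (by linarith))
  have hε : (C / s) ^ 2 ≤ 1 / 2 := by
    rw [div_pow, div_le_iff₀ (by positivity)]
    nlinarith [mul_le_mul hs hs (by positivity) hs0.le, one_le_pow₀ (n := 2) hC]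
  have hsin : 0 < sin (φ i j) := by
    have h0 := sin_nonneg_of_nonneg_of_le_pi (hφ i j hi hij hjN).1 (hφ i j hi hij hjN).2
    have h1 : cos (φ i j) ^ 2 < 1 := by nlinarith [sq_le_sq_of_abs_le hc]
    exact h0.lt_of_ne fun h => by nlinarith [sin_sq_add_cos_sq (φ i j)]
  have hcos : 0 < cos t := by
    nlinarith [one_sub_sq_div_two_le_cos (x := t), sq_le_sq_of_abs_le ht]
  have hm : (n : ℝ) - (n - N - 1 : ℕ) ≤ N + 1 := by
    rw [sub_le_iff_le_add]
    exact_mod_cast (by omega : n ≤ N + 1 + (n - N - 1))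
  refine ⟨by positivity, ?_⟩
  rw [log_mul (by positivity) hcos.ne', log_pow, neg_div, sub_neg_eq_add,
    show alphaTilde n φ i j ^ 2 / 2 = n * t ^ 2 / 2 by
      rw [← hsn, div_pow, mul_div_cancel₀ _ (by positivity)]]
  refine (abs_mul_log_sin_add_log_cos_add_le (Nat.cast_nonneg _)
    (Nat.cast_le.mpr (Nat.sub_le_of_le_add (by omega))) hm hc ht hct hε).trans ?_
  have hs1 : 1 ≤ s := by nlinarith
  have hsN : 1 ≤ N * s := by nlinarith
  have hsC : 1 ≤ s * C ^ 2 := one_le_mul_of_one_le_of_one_le hs1 (one_le_pow₀ hC)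
  rw [← hsn]
  field_simp
  nlinarith [mul_le_mul_of_nonneg_left hsN (sq_nonneg C),
    mul_le_mul_of_nonneg_left hsC (Nat.cast_nonneg N)]

/-- if |α̃_{ij}| ≤ K for all i < j, then
∏_{i<j} sin(φ_{ij})^{n-N-1}·cos(α̃_{ij}/√n) = (1+h)·∏_{i<j} e^{-α̃_{ij}²/2}
with |h| ≤ A·N³/√n. -/
theorem prod_sin_cos_eq_gaussian (K : ℝ) (hK : 0 < K) :
    ∃ (A : ℝ) (n₀ : ℕ), 0 < A ∧ 2 ≤ n₀ ∧
      ∀ (n N : ℕ), n₀ ≤ n → 2 ≤ N → N ^ 6 ≤ n →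
      ∀ φ : ℕ → ℕ → ℝ,
        (∀ a b : ℕ, 1 ≤ a → a < b → b ≤ N → φ a b ∈ Set.Icc 0 Real.pi) →
        (∀ i j : ℕ, 1 ≤ i → i < j → j ≤ N → |alphaTilde n φ i j| ≤ K) →
        ∃ h : ℝ, |h| ≤ A * (N : ℝ) ^ 3 / Real.sqrt n ∧
          (∏ i ∈ Finset.Icc 1 N, ∏ j ∈ Finset.Icc (i + 1) N,
              Real.sin (φ i j) ^ (n - N - 1) * Real.cos (alphaTilde n φ i j / Real.sqrt n)) =
          (1 + h) * ∏ i ∈ Finset.Icc 1 N, ∏ j ∈ Finset.Icc (i + 1) N,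
              Real.exp (-(alphaTilde n φ i j) ^ 2 / 2) := by
  set C := 2 * K + 1
  set B := 7 * C ^ 4
  refine ⟨B * exp B, ⌈(4 * C ^ 2) ^ 6⌉₊ + 2, by positivity, by omega, ?_⟩
  intro n N hn hN hN6 φ hφ hα
  have hN6' : (N : ℝ) ^ 6 ≤ n := by exact_mod_cast hN6
  have hC6 : (4 * C ^ 2) ^ 6 ≤ n := (Nat.le_ceil _).trans (by exact_mod_cast (by omega : _ ≤ n))
  have hN3 : (N : ℝ) ^ 3 ≤ √n :=
    (le_sqrt (by positivity) n.cast_nonneg).mpr (by rwa [← pow_mul])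
  have hnN : 4 * C ^ 2 * N ≤ √n :=
    mul_le_sqrt_of_pow_six_le (by exact_mod_cast (by omega : 1 ≤ n)) hC6 hN6'
  set P := (Icc 1 N).sigma fun i => Icc (i + 1) N
  have hpair : ∀ p ∈ P, _ := fun p hp => by
    obtain ⟨hi, hj⟩ := mem_sigma.mp hp
    exact sin_pow_mul_cos_pos_and_abs_log_sub_le hK.le hnN hφ hα (mem_Icc.mp hi).1
      (by simp at hj; omega) (mem_Icc.mp hj).2
  obtain ⟨h, hh, heq⟩ := exists_prod_eq_one_add_mul_prod_exp P
    (fun p hp => (hpair p hp).1) fun p hp => (hpair p hp).2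
  refine ⟨h, hh.trans ?_, by simpa only [P, prod_sigma] using heq⟩
  have hδ : (#P : ℝ) * (B * N / √n) ≤ B * N ^ 3 / √n := by
    calc (#P : ℝ) * (B * N / √n) ≤ N ^ 2 * (B * N / √n) := by
          gcongr; exact_mod_cast card_sigma_Icc_le_sq N
      _ = B * N ^ 3 / √n := by ring
  have hB : B * N ^ 3 / √n ≤ B := div_le_of_le_mul₀ (sqrt_nonneg _) (by positivity) (by gcongr)
  calc (#P : ℝ) * (B * N / √n) * exp (#P * (B * N / √n)) ≤ B * N ^ 3 / √n * exp B := by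
        gcongr; exact hδ.trans hB
    _ = B * exp B * N ^ 3 / √n := by ring
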